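/- Let φ:(B,β)→(A,α) be a morphism of monoidal Hom-algebras. Then (A⊗_B A, α⊗α) is an (A,α)-Hom-coring (the Sweedler/canonical Hom-coring) with comultiplication Δ(a⊗a')=(α^{-1}(a)⊗1_A)⊗_A(1_A⊗α^{-1}(a')) and counit ε(a⊗a')=aa'. -/

import Mathlib

open TensorProduct

namespace HomPaper

variable {k : Type*} [CommRing k]
variable {A C V : Type*}
variable [AddCommGroup A] [Module k A] [AddCommGroup C] [Module k C]
variable [AddCommGroup V] [Module k V]

/-- Monoidal Hom-algebra axioms. -/
def IsHomAlgebra (α : A ≃ₗ[k] A) (mul : A →ₗ[k] A →ₗ[k] A) (one : A) : Prop :=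
  (∀ a b c, mul (α a) (mul b c) = mul (mul a b) (α c)) ∧
  (∀ a, mul a one = α a) ∧ (∀ a, mul one a = α a) ∧
  (∀ a b, α (mul a b) = mul (α a) (α b)) ∧ α one = one

/-- Monoidal Hom-coalgebra axioms. -/
def IsHomCoalgebra (γ : C ≃ₗ[k] C) (Δ : C →ₗ[k] C ⊗[k] C) (ε : C →ₗ[k] k) : Prop :=
  (∀ c, TensorProduct.map γ.symm.toLinearMap Δ (Δ c)
      = TensorProduct.assoc k C C C (TensorProduct.map Δ γ.symm.toLinearMap (Δ c))) ∧
  (∀ c, TensorProduct.lid k C (TensorProduct.map ε LinearMap.id (Δ c)) = γ.symm c) ∧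
  (∀ c, TensorProduct.rid k C (TensorProduct.map LinearMap.id ε (Δ c)) = γ.symm c) ∧
  (∀ c, Δ (γ c) = TensorProduct.map γ.toLinearMap γ.toLinearMap (Δ c)) ∧
  (∀ c, ε (γ c) = ε c)

/-- Hom-entwining structure axioms for ψ : C ⊗ A → A ⊗ C, ψ(c⊗a) = a_κ ⊗ c^κ. -/
def IsHomEntwining (α : A ≃ₗ[k] A) (γ : C ≃ₗ[k] C) (mul : A →ₗ[k] A →ₗ[k] A) (one : A)
    (Δ : C →ₗ[k] C ⊗[k] C) (ε : C →ₗ[k] k) (ψ : C ⊗[k] A →ₗ[k] A ⊗[k] C) : Prop :=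
  -- (aa')_κ ⊗ γ(c)^κ = a_κ a'_λ ⊗ γ(c^{κλ})
  (∀ c a a', ψ (γ c ⊗ₜ mul a a')
      = TensorProduct.map (TensorProduct.lift mul) γ.toLinearMap
          ((TensorProduct.assoc k A A C).symm
            (TensorProduct.map LinearMap.id ψ
              (TensorProduct.assoc k A C A (ψ (c ⊗ₜ a) ⊗ₜ a'))))) ∧
  -- α⁻¹(a_κ) ⊗ c^κ₁ ⊗ c^κ₂ = α⁻¹(a)_{κλ} ⊗ c₁^λ ⊗ c₂^κ
  (∀ c a, TensorProduct.map α.symm.toLinearMap Δ (ψ (c ⊗ₜ a))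
      = TensorProduct.assoc k A C C
          (TensorProduct.map ψ LinearMap.id
            ((TensorProduct.assoc k C A C).symm
              (TensorProduct.map LinearMap.id ψ
                (TensorProduct.assoc k C C A (Δ c ⊗ₜ α.symm a)))))) ∧
  -- 1_κ ⊗ c^κ = 1 ⊗ c
  (∀ c, ψ (c ⊗ₜ one) = one ⊗ₜ c) ∧
  -- a_κ ε(c^κ) = a ε(c)
  (∀ c a, TensorProduct.rid k A (TensorProduct.map LinearMap.id ε (ψ (c ⊗ₜ a))) = ε c • a) ∧
  -- ψ is a morphism in the Hom-category
  (∀ c a, ψ (γ c ⊗ₜ α a) = TensorProduct.map α.toLinearMap γ.toLinearMap (ψ (c ⊗ₜ a)))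

/-- The relations defining `V ⊗_A V` (on top of base relations `R₀` defining the coring
module as a quotient of `V`). -/
def corRel (R₀ : Submodule k V) (χ : V ≃ₗ[k] V)
    (lact : A →ₗ[k] V →ₗ[k] V) (ract : V →ₗ[k] A →ₗ[k] V) : Submodule k (V ⊗[k] V) :=
  Submodule.span k
    ({x | ∃ v a w, x = ract v a ⊗ₜ w - χ v ⊗ₜ lact a (χ.symm w)} ∪
     {x | ∃ r w, r ∈ R₀ ∧ (x = r ⊗ₜ w ∨ x = w ⊗ₜ r)})

/-- Induced left A-action on `V ⊗_A V` (on representatives). -/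
noncomputable def lact2 (α : A ≃ₗ[k] A) (χ : V ≃ₗ[k] V) (lact : A →ₗ[k] V →ₗ[k] V) (a : A) :
    V ⊗[k] V →ₗ[k] V ⊗[k] V :=
  TensorProduct.map (lact (α.symm a)) χ.toLinearMap

/-- Induced right A-action on `V ⊗_A V` (on representatives). -/
noncomputable def ract2 (α : A ≃ₗ[k] A) (χ : V ≃ₗ[k] V) (ract : V →ₗ[k] A →ₗ[k] V) (a : A) :
    V ⊗[k] V →ₗ[k] V ⊗[k] V :=
  TensorProduct.map χ.toLinearMap (ract.flip (α.symm a))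

/-- The relations defining `V ⊗_A (V ⊗_A V)`. -/
def corRel3 (R₀ : Submodule k V) (α : A ≃ₗ[k] A) (χ : V ≃ₗ[k] V)
    (lact : A →ₗ[k] V →ₗ[k] V) (ract : V →ₗ[k] A →ₗ[k] V) :
    Submodule k (V ⊗[k] (V ⊗[k] V)) :=
  Submodule.span k
    ({x | ∃ v a w, x = ract v a ⊗ₜ w - χ v ⊗ₜ lact2 α χ lact a w} ∪
     {x | ∃ v w, w ∈ corRel R₀ χ lact ract ∧ x = v ⊗ₜ w} ∪
     {x | ∃ r w, r ∈ R₀ ∧ x = r ⊗ₜ w})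

/-- `(V,χ)` (modulo the relations `R₀`) together with the A-bimodule structure
`lact`, `ract`, comultiplication representative `Δ` and counit `ε` is an
`(A,α)`-Hom-coring: all axioms are stated on representatives, under the quotient
projections by `R₀` resp. the tensor-relation submodules. -/
def IsHomCoring (α : A ≃ₗ[k] A) (mul : A →ₗ[k] A →ₗ[k] A) (one : A)
    (χ : V ≃ₗ[k] V) (lact : A →ₗ[k] V →ₗ[k] V) (ract : V →ₗ[k] A →ₗ[k] V)
    (R₀ : Submodule k V) (Δ : V →ₗ[k] V ⊗[k] V) (ε : V →ₗ[k] A) : Prop :=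
  -- (V,χ) is an (A,α)-Hom-bimodule
  (∀ a b v, Submodule.Quotient.mk (p := R₀) (lact (mul a b) (χ v))
      = Submodule.Quotient.mk (p := R₀) (lact (α a) (lact b v))) ∧
  (∀ v, Submodule.Quotient.mk (p := R₀) (lact one v) = Submodule.Quotient.mk (p := R₀) (χ v)) ∧
  (∀ v a b, Submodule.Quotient.mk (p := R₀) (ract (χ v) (mul a b))
      = Submodule.Quotient.mk (p := R₀) (ract (ract v a) (α b))) ∧
  (∀ v, Submodule.Quotient.mk (p := R₀) (ract v one) = Submodule.Quotient.mk (p := R₀) (χ v)) ∧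
  (∀ a v b, Submodule.Quotient.mk (p := R₀) (ract (lact a v) (α b))
      = Submodule.Quotient.mk (p := R₀) (lact (α a) (ract v b))) ∧
  (∀ a v, Submodule.Quotient.mk (p := R₀) (χ (lact a v))
      = Submodule.Quotient.mk (p := R₀) (lact (α a) (χ v))) ∧
  (∀ v a, Submodule.Quotient.mk (p := R₀) (χ (ract v a))
      = Submodule.Quotient.mk (p := R₀) (ract (χ v) (α a))) ∧
  (∀ r ∈ R₀, χ r ∈ R₀) ∧
  -- Δ and ε are well defined on the quotient by R₀
  (∀ r ∈ R₀, Submodule.Quotient.mk (p := corRel R₀ χ lact ract) (Δ r) = 0) ∧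
  (∀ r ∈ R₀, ε r = 0) ∧
  -- A-bilinearity of Δ
  (∀ a v, Submodule.Quotient.mk (p := corRel R₀ χ lact ract) (Δ (lact a v))
      = Submodule.Quotient.mk (p := corRel R₀ χ lact ract) (lact2 α χ lact a (Δ v))) ∧
  (∀ v a, Submodule.Quotient.mk (p := corRel R₀ χ lact ract) (Δ (ract v a))
      = Submodule.Quotient.mk (p := corRel R₀ χ lact ract) (ract2 α χ ract a (Δ v))) ∧
  -- A-bilinearity of ε
  (∀ a v, ε (lact a v) = mul a (ε v)) ∧
  (∀ v a, ε (ract v a) = mul (ε v) a) ∧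
  -- Hom-coassociativity: χ⁻¹(c₁) ⊗ Δ(c₂) = c₁₁ ⊗ (c₁₂ ⊗ χ⁻¹(c₂))
  (∀ v, Submodule.Quotient.mk (p := corRel3 R₀ α χ lact ract)
        (TensorProduct.map χ.symm.toLinearMap Δ (Δ v))
      = Submodule.Quotient.mk (p := corRel3 R₀ α χ lact ract)
        (TensorProduct.assoc k V V V (TensorProduct.map Δ χ.symm.toLinearMap (Δ v)))) ∧
  -- counity: ε(c₁)c₂ = c = c₁ε(c₂)
  (∀ v, Submodule.Quotient.mk (p := R₀) (TensorProduct.lift (lact ∘ₗ ε) (Δ v))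
      = Submodule.Quotient.mk (p := R₀) v) ∧
  (∀ v, Submodule.Quotient.mk (p := R₀) (TensorProduct.lift (ract.compl₂ ε) (Δ v))
      = Submodule.Quotient.mk (p := R₀) v) ∧
  -- compatibility with the twisting maps
  (∀ v, Submodule.Quotient.mk (p := corRel R₀ χ lact ract) (Δ (χ v))
      = Submodule.Quotient.mk (p := corRel R₀ χ lact ract)
        (TensorProduct.map χ.toLinearMap χ.toLinearMap (Δ v))) ∧
  (∀ v, ε (χ v) = α (ε v))

end HomPaper

namespace HomPaper

variable {k : Type*} [CommRing k] {A B : Type*}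
variable [AddCommGroup A] [Module k A] [AddCommGroup B] [Module k B]

/-- Left `(A,α)`-action on `A ⊗_B A`: `a''(a⊗a') = α⁻¹(a'')a ⊗ α(a')`. -/
noncomputable def sweedlerLact (α : A ≃ₗ[k] A) (mul : A →ₗ[k] A →ₗ[k] A) :
    A →ₗ[k] (A ⊗[k] A) →ₗ[k] A ⊗[k] A :=
  TensorProduct.curry
    ((TensorProduct.map
        ((TensorProduct.lift mul) ∘ₗ TensorProduct.map α.symm.toLinearMap LinearMap.id)
        α.toLinearMap) ∘ₗ (TensorProduct.assoc k A A A).symm.toLinearMap)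

/-- Right `(A,α)`-action on `A ⊗_B A`: `(a⊗a')a'' = α(a) ⊗ a'·α⁻¹(a'')`. -/
noncomputable def sweedlerRact (α : A ≃ₗ[k] A) (mul : A →ₗ[k] A →ₗ[k] A) :
    (A ⊗[k] A) →ₗ[k] A →ₗ[k] A ⊗[k] A :=
  TensorProduct.curry
    ((TensorProduct.map α.toLinearMap
        ((TensorProduct.lift mul) ∘ₗ TensorProduct.map LinearMap.id α.symm.toLinearMap)) ∘ₗ
      (TensorProduct.assoc k A A A).toLinearMap)

/-- The `B`-balancing relations presenting `A ⊗_B A` as a quotient of `A ⊗ A`. -/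
def sweedlerRel (α : A ≃ₗ[k] A) (mul : A →ₗ[k] A →ₗ[k] A) (φ : B →ₗ[k] A) :
    Submodule k (A ⊗[k] A) :=
  Submodule.span k
    {x | ∃ a b a', x = mul a (φ b) ⊗ₜ a' - α a ⊗ₜ mul (φ b) (α.symm a')}

/-- Comultiplication of the Sweedler Hom-coring:
`Δ(a⊗a') = (α⁻¹(a)⊗1) ⊗ (1⊗α⁻¹(a'))`. -/
noncomputable def sweedlerComul (α : A ≃ₗ[k] A) (one : A) :
    (A ⊗[k] A) →ₗ[k] (A ⊗[k] A) ⊗[k] (A ⊗[k] A) :=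
  TensorProduct.map (((TensorProduct.mk k A A).flip one) ∘ₗ α.symm.toLinearMap)
    (((TensorProduct.mk k A A) one) ∘ₗ α.symm.toLinearMap)

lemma sweedlerLact_tmul (α : A ≃ₗ[k] A) (mul : A →ₗ[k] A →ₗ[k] A) (x a a' : A) :
    sweedlerLact α mul x (a ⊗ₜ[k] a') = mul (α.symm x) a ⊗ₜ α a' := by
  simp [sweedlerLact]

lemma sweedlerRact_tmul (α : A ≃ₗ[k] A) (mul : A →ₗ[k] A →ₗ[k] A) (x a a' : A) :
    sweedlerRact α mul (a ⊗ₜ[k] a') x = α a ⊗ₜ mul a' (α.symm x) := by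
  simp [sweedlerRact]

lemma sweedlerComul_tmul (α : A ≃ₗ[k] A) (one : A) (a a' : A) :
    sweedlerComul α one (a ⊗ₜ[k] a') = (α.symm a ⊗ₜ one) ⊗ₜ (one ⊗ₜ α.symm a') := by
  simp [sweedlerComul]


/-- For a morphism of monoidal Hom-algebras `φ : (B,β) → (A,α)`, the
balanced tensor product `(A ⊗_B A, α⊗α)` is an `(A,α)`-Hom-coring (the Sweedler or
canonical Hom-coring) with comultiplication `Δ(a⊗a') = (α⁻¹(a)⊗1)⊗(1⊗α⁻¹(a'))` and
counit `ε(a⊗a') = aa'`. -/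
theorem sweedler_homCoring
    (β : B ≃ₗ[k] B) (mulB : B →ₗ[k] B →ₗ[k] B) (oneB : B)
    (α : A ≃ₗ[k] A) (mulA : A →ₗ[k] A →ₗ[k] A) (oneA : A)
    (hB : IsHomAlgebra β mulB oneB) (hA : IsHomAlgebra α mulA oneA)
    (φ : B →ₗ[k] A)
    (hφmul : ∀ b b', φ (mulB b b') = mulA (φ b) (φ b'))
    (hφone : φ oneB = oneA)
    (hφβ : ∀ b, φ (β b) = α (φ b)) :
    IsHomCoring α mulA oneA (TensorProduct.congr α α)
      (sweedlerLact α mulA) (sweedlerRact α mulA)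
      (sweedlerRel α mulA φ)
      (sweedlerComul α oneA) (TensorProduct.lift mulA) := by
  obtain ⟨hassoc, hor, hol, hm, ho1⟩ := hA
  have hso : α.symm oneA = oneA := by
    conv_lhs => rw [← ho1]
    exact α.symm_apply_apply oneA
  have hsm : ∀ x y, α.symm (mulA x y) = mulA (α.symm x) (α.symm y) := by
    intro x y
    apply α.injective
    rw [hm, α.apply_symm_apply, α.apply_symm_apply, α.apply_symm_apply]
  have hφs : ∀ b, α.symm (φ b) = φ (β.symm b) := by
    intro b
    apply α.injective
    rw [α.apply_symm_apply, ← hφβ, β.apply_symm_apply]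
  refine ⟨?_, ?_, ?_, ?_, ?_, ?_, ?_, ?_, ?_, ?_, ?_, ?_, ?_, ?_, ?_, ?_, ?_, ?_, ?_⟩
  · -- lact (mul a b) (χ v) = lact (α a) (lact b v)
    intro a b v
    congr 1
    induction v using TensorProduct.induction_on with
    | zero => simp
    | tmul x y =>
      simp only [congr_tmul, sweedlerLact_tmul, hsm]
      rw [← hassoc]
      simp only [α.apply_symm_apply, α.symm_apply_apply]
    | add p q hp hq => simp only [map_add, hp, hq]
  · -- lact one v = χ v
    intro v
    congr 1
    induction v using TensorProduct.induction_on with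
    | zero => simp
    | tmul x y => simp only [congr_tmul, sweedlerLact_tmul, hso, hol]
    | add p q hp hq => simp only [map_add, hp, hq]
  · -- ract (χ v) (mul a b) = ract (ract v a) (α b)
    intro v a b
    congr 1
    induction v using TensorProduct.induction_on with
    | zero => simp
    | tmul x y =>
      simp only [congr_tmul, sweedlerRact_tmul, hsm, α.symm_apply_apply]
      congr 1
      rw [← α.apply_symm_apply b, hassoc, α.symm_apply_apply]
    | add p q hp hq => simp only [map_add, LinearMap.add_apply, hp, hq]
  · -- ract v one = χ v
    intro v
    congr 1
    induction v using TensorProduct.induction_on with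
    | zero => simp
    | tmul x y => simp only [congr_tmul, sweedlerRact_tmul, hso, hor]
    | add p q hp hq => simp only [map_add, LinearMap.add_apply, hp, hq]
  · -- ract (lact a v) (α b) = lact (α a) (ract v b)
    intro a v b
    congr 1
    induction v using TensorProduct.induction_on with
    | zero => simp
    | tmul x y =>
      simp only [sweedlerLact_tmul, sweedlerRact_tmul, hm, α.symm_apply_apply,
        α.apply_symm_apply]
    | add p q hp hq => simp only [map_add, LinearMap.add_apply, hp, hq]
  · -- χ (lact a v) = lact (α a) (χ v)
    intro a v
    congr 1
    induction v using TensorProduct.induction_on with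
    | zero => simp
    | tmul x y =>
      simp only [sweedlerLact_tmul, congr_tmul, hm, α.symm_apply_apply, α.apply_symm_apply]
    | add p q hp hq => simp only [map_add, hp, hq]
  · -- χ (ract v a) = ract (χ v) (α a)
    intro v a
    congr 1
    induction v using TensorProduct.induction_on with
    | zero => simp
    | tmul x y =>
      simp only [sweedlerRact_tmul, congr_tmul, hm, α.symm_apply_apply, α.apply_symm_apply]
    | add p q hp hq => simp only [map_add, LinearMap.add_apply, hp, hq]
  · -- χ preserves R₀
    intro r hr
    have hle : sweedlerRel α mulA φ ≤
        (sweedlerRel α mulA φ).comap (TensorProduct.congr α α).toLinearMap := by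
      rw [sweedlerRel, Submodule.span_le]
      rintro x ⟨a, b, a', rfl⟩
      simp only [SetLike.mem_coe, Submodule.mem_comap, LinearEquiv.coe_coe, map_sub, congr_tmul, hm,
        α.symm_apply_apply]
      apply Submodule.subset_span
      refine ⟨α a, β b, α a', ?_⟩
      rw [hφβ, α.symm_apply_apply, α.apply_symm_apply]
    exact hle hr
  · -- Δ r = 0 mod corRel for r ∈ R₀
    intro r hr
    rw [Submodule.Quotient.mk_eq_zero]
    have hle : sweedlerRel α mulA φ ≤
        (corRel (sweedlerRel α mulA φ) (TensorProduct.congr α α)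
          (sweedlerLact α mulA) (sweedlerRact α mulA)).comap (sweedlerComul α oneA) := by
      rw [sweedlerRel, Submodule.span_le]
      rintro x ⟨a, b, a', rfl⟩
      simp only [SetLike.mem_coe, Submodule.mem_comap, map_sub, sweedlerComul_tmul, hsm, hφs,
        α.symm_apply_apply]
      have e1mem : ((mulA (α.symm a) (φ (β.symm b)) ⊗ₜ[k] oneA - a ⊗ₜ[k] φ b) ⊗ₜ[k]
          ((oneA : A) ⊗ₜ[k] α.symm a')) ∈
          corRel (sweedlerRel α mulA φ) (TensorProduct.congr α α)
            (sweedlerLact α mulA) (sweedlerRact α mulA) := by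
        apply Submodule.subset_span
        refine Or.inr ⟨_, oneA ⊗ₜ α.symm a', ?_, Or.inl rfl⟩
        apply Submodule.subset_span
        refine ⟨α.symm a, β.symm b, oneA, ?_⟩
        rw [α.apply_symm_apply, hso, hor, ← hφs, α.apply_symm_apply]
      have e2mem : ((a ⊗ₜ[k] φ b) ⊗ₜ[k] ((oneA : A) ⊗ₜ[k] α.symm a') -
          (a ⊗ₜ[k] oneA) ⊗ₜ[k] (φ b ⊗ₜ[k] α.symm a')) ∈
          corRel (sweedlerRel α mulA φ) (TensorProduct.congr α α)
            (sweedlerLact α mulA) (sweedlerRact α mulA) := by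
        apply Submodule.subset_span
        refine Or.inl ⟨α.symm a ⊗ₜ oneA, φ b, oneA ⊗ₜ α.symm a', ?_⟩
        rw [sweedlerRact_tmul, α.apply_symm_apply, hol, α.apply_symm_apply]
        congr 2
        · rw [congr_tmul, α.apply_symm_apply, ho1]
        · rw [congr_symm_tmul, hso, sweedlerLact_tmul, hφs, hor, ← hφs,
            α.apply_symm_apply, α.apply_symm_apply]
      have e3mem : ((a ⊗ₜ[k] oneA) ⊗ₜ[k]
          (φ b ⊗ₜ[k] α.symm a' - (oneA : A) ⊗ₜ[k] mulA (φ (β.symm b)) (α.symm (α.symm a')))) ∈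
          corRel (sweedlerRel α mulA φ) (TensorProduct.congr α α)
            (sweedlerLact α mulA) (sweedlerRact α mulA) := by
        apply Submodule.subset_span
        refine Or.inr ⟨_, a ⊗ₜ oneA, ?_, Or.inr rfl⟩
        apply Submodule.subset_span
        refine ⟨oneA, β.symm b, α.symm a', ?_⟩
        rw [hol, ← hφs, α.apply_symm_apply, ho1]
      have hsum := Submodule.add_mem _ (Submodule.add_mem _ e1mem e2mem) e3mem
      convert hsum using 1
      case e'_4 => rfl
      rw [TensorProduct.sub_tmul, TensorProduct.tmul_sub]
      abel
    exact hle hr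
  · -- ε r = 0
    intro r hr
    have hle : sweedlerRel α mulA φ ≤ LinearMap.ker (TensorProduct.lift mulA) := by
      rw [sweedlerRel, Submodule.span_le]
      rintro x ⟨a, b, a', rfl⟩
      simp only [SetLike.mem_coe, LinearMap.mem_ker, map_sub, lift.tmul]
      rw [← α.apply_symm_apply a', hassoc, α.symm_apply_apply, sub_self]
    exact hle hr
  · -- Δ ∘ lact = lact2 ∘ Δ
    intro a v
    congr 1
    induction v using TensorProduct.induction_on with
    | zero => simp
    | tmul x y =>
      simp only [sweedlerLact_tmul, sweedlerComul_tmul, lact2, map_tmul, hsm,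
        α.symm_apply_apply, congr_tmul, α.apply_symm_apply, LinearEquiv.coe_coe, ho1]
    | add p q hp hq => simp only [map_add, hp, hq]
  · -- Δ ∘ ract = ract2 ∘ Δ
    intro v a
    congr 1
    induction v using TensorProduct.induction_on with
    | zero => simp
    | tmul x y =>
      simp only [sweedlerRact_tmul, sweedlerComul_tmul, ract2, map_tmul, hsm,
        α.symm_apply_apply, congr_tmul, α.apply_symm_apply, LinearEquiv.coe_coe, ho1,
        LinearMap.flip_apply]
    | add p q hp hq => simp only [map_add, LinearMap.add_apply, hp, hq]
  · -- ε (lact a v) = mul a (ε v)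
    intro a v
    induction v using TensorProduct.induction_on with
    | zero => simp
    | tmul x y =>
      simp only [sweedlerLact_tmul, lift.tmul]
      rw [← α.apply_symm_apply a, hassoc, α.symm_apply_apply]
    | add p q hp hq => simp only [map_add, hp, hq]
  · -- ε (ract v a) = mul (ε v) a
    intro v a
    induction v using TensorProduct.induction_on with
    | zero => simp
    | tmul x y =>
      simp only [sweedlerRact_tmul, lift.tmul]
      rw [hassoc, α.apply_symm_apply]
    | add p q hp hq => simp only [map_add, LinearMap.add_apply, hp, hq]
  · -- Hom-coassociativity
    intro v
    congr 1
    induction v using TensorProduct.induction_on with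
    | zero => simp
    | tmul x y =>
      simp only [sweedlerComul_tmul, map_tmul, congr_symm_tmul, hso, assoc_tmul,
        LinearEquiv.coe_coe]
    | add p q hp hq => simp only [map_add, hp, hq]
  · -- left counity
    intro v
    congr 1
    induction v using TensorProduct.induction_on with
    | zero => simp
    | tmul x y =>
      simp only [sweedlerComul_tmul, lift.tmul, LinearMap.comp_apply, hor,
        sweedlerLact_tmul, α.symm_apply_apply, α.apply_symm_apply]
    | add p q hp hq => simp only [map_add, hp, hq]
  · -- right counity
    intro v
    congr 1
    induction v using TensorProduct.induction_on with
    | zero => simp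
    | tmul x y =>
      simp only [sweedlerComul_tmul, lift.tmul, LinearMap.compl₂_apply, hol,
        sweedlerRact_tmul, α.symm_apply_apply, α.apply_symm_apply]
    | add p q hp hq => simp only [map_add, hp, hq]
  · -- Δ (χ v) = (χ ⊗ χ) (Δ v)
    intro v
    congr 1
    induction v using TensorProduct.induction_on with
    | zero => simp
    | tmul x y =>
      simp only [congr_tmul, sweedlerComul_tmul, map_tmul, α.symm_apply_apply, ho1,
        LinearEquiv.coe_coe, α.apply_symm_apply]
    | add p q hp hq => simp only [map_add, hp, hq]
  · -- ε (χ v) = α (ε v)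
    intro v
    induction v using TensorProduct.induction_on with
    | zero => simp
    | tmul x y => simp only [congr_tmul, lift.tmul, hm]
    | add p q hp hq => simp only [map_add, hp, hq]

end HomPaper
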